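/- Counting lemma for ball covers: let Y be a connected metric space covered by N' balls of radius r whose centers lie in Y and are pairwise at distance > r from each other. Then the total 1-dimensional 'length' of Y (interpreted as the number of unit-length edges when Y is a connected graph with unit edges) is at least (N'−1)·r/2. -/

import Mathlib

/-!
Put `t = ⌊r / 2⌋`. The closed balls of radius `t` about the centres are pairwise disjoint, and
each contains a vertex at every distance `0, …, t` from its centre (cut a geodesic to another
centre), so `Y` has at least `N' (t + 1)` vertices. A connected graph has at least `|V| - 1`
edges, and `r ≤ 2t + 1` turns this into the bound.
-/

open Finset

namespace SimpleGraph

variable {V : Type*} {G : SimpleGraph V}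

lemma exists_dist_eq_of_le_dist {u w : V} {d : ℕ} (hd : d ≤ G.dist u w) :
    ∃ v, G.dist u v = d := by
  rcases Nat.eq_zero_or_pos d with rfl | hd₀
  · exact ⟨u, dist_self⟩
  have hreach : G.Reachable u w := Reachable.of_dist_ne_zero (by omega)
  obtain ⟨p, hp⟩ := hreach.exists_walk_length_eq_dist
  refine ⟨p.getVert d, ?_⟩
  rw [← length_eq_dist_of_subwalk hp (p.isSubwalk_take d), Walk.take_length]
  omega

lemma Connected.card_mul_succ_le_card_of_pairwise_lt_dist [Fintype V] (hconn : G.Connected)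
    {ι : Type*} [Fintype ι] (c : ι → V) (t : ℕ)
    (hsep : Pairwise fun i j ↦ 2 * t < G.dist (c i) (c j))
    (hrad : ∀ i, ∃ w, t ≤ G.dist (c i) w) :
    Fintype.card ι * (t + 1) ≤ Fintype.card V := by
  choose w hw using hrad
  choose f hf using fun (i : ι) (d : Fin (t + 1)) ↦
    exists_dist_eq_of_le_dist ((Nat.le_of_lt_succ d.isLt).trans (hw i))
  have hinj : Function.Injective fun p : ι × Fin (t + 1) ↦ f p.1 p.2 := by
    rintro ⟨i, d⟩ ⟨j, e⟩ hfij
    simp only at hfij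
    obtain rfl | hij := eq_or_ne i j
    · exact Prod.ext rfl (Fin.ext (by rw [← hf i d, ← hf i e, hfij]))
    · have htri : G.dist (c i) (c j) ≤ G.dist (c i) (f i d) + G.dist (f j e) (c j) :=
        hfij ▸ hconn.dist_triangle
      rw [hf, dist_comm (u := f j e), hf] at htri
      have := hsep hij
      omega
  simpa using Fintype.card_le_of_injective _ hinj

end SimpleGraph

open SimpleGraph

theorem ball_cover_edge_count_general
    {V : Type*} [Fintype V] (Y : SimpleGraph V) [DecidableRel Y.Adj]
    (hconn : Y.Connected)
    (N' r : ℕ) (hN' : 2 ≤ N')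
    (x : Fin N' → V)
    (hfar : ∀ i j : Fin N', i ≠ j → r < Y.dist (x i) (x j)) :
    (N' - 1) * r ≤ 2 * Y.edgeFinset.card := by
  have : Nontrivial (Fin N') := Fin.nontrivial_iff_two_le.mpr hN'
  have hsep : Pairwise fun i j ↦ 2 * (r / 2) < Y.dist (x i) (x j) := fun i j hij ↦
    (Nat.mul_div_le r 2).trans_lt (hfar i j hij)
  have hrad (i : Fin N') : ∃ w, r / 2 ≤ Y.dist (x i) w := by
    obtain ⟨j, hji⟩ := exists_ne i
    exact ⟨x j, (Nat.div_le_self r 2).trans (hfar i j hji.symm).le⟩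
  have hV := hconn.card_mul_succ_le_card_of_pairwise_lt_dist x (r / 2) hsep hrad
  have hE : Fintype.card V ≤ #Y.edgeFinset + 1 := by
    simpa [Nat.card_eq_fintype_card, edgeFinset_card] using
      hconn.card_vert_le_card_edgeSet_add_one
  rw [Fintype.card_fin] at hV
  obtain ⟨n, rfl⟩ : ∃ n, N' = n + 1 := ⟨N' - 1, by omega⟩
  calc (n + 1 - 1) * r ≤ n * (2 * (r / 2) + 1) := by
        rw [Nat.add_sub_cancel]; exact Nat.mul_le_mul_left n (by omega)
    _ ≤ 2 * #Y.edgeFinset := by nlinarith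

theorem ball_cover_edge_count
    {V : Type*} [Fintype V] (Y : SimpleGraph V) [DecidableRel Y.Adj]
    (hconn : Y.Connected)
    (N' r : ℕ) (hr : 1 ≤ r) (hN' : 2 ≤ N')
    (x : Fin N' → V)
    (hfar : ∀ i j : Fin N', i ≠ j → r < Y.dist (x i) (x j)) :
    (N' - 1) * r ≤ 2 * Y.edgeFinset.card :=
  ball_cover_edge_count_general Y hconn N' r hN' x hfar
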